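/- For coprime positive integers p, q and every integer j with 0 ≤ j < p + q, one has the splitting identity ((2j + 1 - p - q)^2 - pq)/(4pq) = d(L(q,p), j) + d(L(p,q), j), where d(L(p,q), i) denotes the lens space correction term defined recursively by d(L(p,q), i) = ((2i+1-p-q)^2 - pq)/(4pq) - d(L(q, p mod q), i mod q) and d(L(1,0), 0) = 0. -/
import Mathlib


/-- Ozsváth–Szabó recursive correction term of the lens space `L(p,q)`. -/
def dL (p : ℕ) (q : ℕ) (i : ℤ) : ℚ :=
  if h : q = 0 then 0
  else ((2 * (i : ℚ) + 1 - p - q) ^ 2 - p * q) / (4 * p * q) - dL q (p % q) (i % q)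
termination_by q
decreasing_by exact Nat.mod_lt p (Nat.pos_of_ne_zero h)

lemma dL_unfold (P Q : ℕ) (x : ℤ) (h : Q ≠ 0) :
    dL P Q x = ((2 * (x : ℚ) + 1 - P - Q) ^ 2 - P * Q) / (4 * P * Q) - dL Q (P % Q) (x % Q) := by
  rw [dL, dif_neg h]

lemma dL_zero (P : ℕ) (x : ℤ) : dL P 0 x = 0 := by rw [dL]; simp

/-- Key shift lemma. -/
lemma dL_star (r : ℕ) : ∀ p : ℕ, r < p → Nat.Coprime p r → ∀ i : ℤ, 0 ≤ i → i < p →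
    dL p r ((i + (r : ℤ)) % p) = dL p r i + (2 * (i : ℚ) + 1 - p) / p := by
  induction r using Nat.strong_induction_on with
  | _ r IH =>
    intro p hrp hcop i hi0 hi1
    by_cases hr : r = 0
    · subst hr
      have hp1 : p = 1 := by simpa [Nat.Coprime] using hcop
      subst hp1
      have hi : i = 0 := by omega
      subst hi
      simp [dL_zero]
    · -- r > 0
      have hp0 : p ≠ 0 := by omega
      set s := p % r with hs
      have hsr : s < r := Nat.mod_lt p (Nat.pos_of_ne_zero hr)
      have hcop' : Nat.Coprime r s := by
        have h2 : Nat.Coprime s r := by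
          rw [Nat.Coprime, hs, ← Nat.gcd_rec]
          exact hcop.symm
        exact h2.symm
      have hdiv : (p : ℤ) = r * (p / r : ℕ) + s := by
        exact_mod_cast (Nat.div_add_mod p r).symm
      have hpQ : (p : ℚ) ≠ 0 := by exact_mod_cast hp0
      have hrQ : (r : ℚ) ≠ 0 := by exact_mod_cast hr
      by_cases hcase : i + (r : ℤ) < p
      · -- no wraparound
        have hmod : (i + (r : ℤ)) % p = i + r := Int.emod_eq_of_lt (by omega) hcase
        rw [hmod, dL_unfold p r _ hr, dL_unfold p r i hr]
        have hmr : (i + (r : ℤ)) % r = i % r := by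
          simp
        rw [hmr]
        push_cast
        field_simp
        ring
      · -- wraparound
        set i' : ℤ := i + r - p with hi'
        have hi'0 : 0 ≤ i' := by omega
        have hi'r : i' < r := by omega
        have hmod : (i + (r : ℤ)) % p = i' := by
          have he : i + (r : ℤ) = i' + (p : ℤ) * 1 := by omega
          rw [he, Int.add_mul_emod_self_left]
          exact Int.emod_eq_of_lt hi'0 (by omega)
        have hIH := IH s hsr r hsr hcop' i' hi'0 hi'r
        have h3 : i' + (s : ℤ) = i + r * (1 - (p / r : ℕ) : ℤ) := by
          rw [hi']; linear_combination -hdiv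
        have hshift : (i' + (s : ℤ)) % r = i % r := by
          rw [h3, Int.add_mul_emod_self_left]
        rw [hshift] at hIH
        have hi'mod : i' % r = i' := Int.emod_eq_of_lt hi'0 hi'r
        rw [hmod, dL_unfold p r i' hr, dL_unfold p r i hr, hi'mod, hIH]
        have hc : (i' : ℚ) = i + r - p := by rw [hi']; push_cast; ring
        rw [hc]
        field_simp
        ring

lemma main_lt (p q : ℕ) (hp : 0 < p) (hlt : p < q) (hpq : Nat.Coprime p q)
    (j : ℤ) (h0 : 0 ≤ j) (h1 : j < p + q) :
    ((2 * (j : ℚ) + 1 - p - q) ^ 2 - p * q) / (4 * p * q) = dL q p j + dL p q j := by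
  have hp0 : p ≠ 0 := by omega
  have hq0 : q ≠ 0 := by omega
  set r := q % p with hr
  have hrp : r < p := Nat.mod_lt q hp
  have hcopr : Nat.Coprime p r := by
    have h2 : Nat.Coprime r p := by
      rw [Nat.Coprime, hr, ← Nat.gcd_rec]
      exact hpq
    exact h2.symm
  have hpQ : (p : ℚ) ≠ 0 := by exact_mod_cast hp0
  have hqQ : (q : ℚ) ≠ 0 := by exact_mod_cast hq0
  rw [dL_unfold q p j hp0, dL_unfold p q j hq0, Nat.mod_eq_of_lt hlt,
    dL_unfold q p (j % q) hp0]
  by_cases hcase : j < (q : ℤ)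
  · rw [Int.emod_eq_of_lt h0 hcase]
    ring
  · set i : ℤ := j - q with hi
    have hi0 : 0 ≤ i := by omega
    have hip : i < (p : ℤ) := by omega
    have hjq : j % q = i := by
      have he : j = i + (q : ℤ) * 1 := by omega
      rw [he, Int.add_mul_emod_self_left]
      exact Int.emod_eq_of_lt hi0 (by omega)
    have hdiv : (q : ℤ) = p * (q / p : ℕ) + r := by
      exact_mod_cast (Nat.div_add_mod q p).symm
    have hjp : j % p = (i + (r : ℤ)) % p := by
      have he : j = (i + (r : ℤ)) + (p : ℤ) * (q / p : ℕ) := by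
        rw [hi]; linear_combination hdiv
      rw [he, Int.add_mul_emod_self_left]
    have hipp : i % p = i := Int.emod_eq_of_lt hi0 hip
    rw [hjq, hjp, hipp, dL_star r p hrp hcopr i hi0 hip]
    have hjc : (j : ℚ) = (i : ℚ) + q := by rw [hi]; push_cast; ring
    rw [hjc]
    field_simp
    ring

theorem stmt_5 (p q : ℕ) (hp : 0 < p) (hq : 0 < q) (hpq : Nat.Coprime p q)
    (j : ℤ) (h0 : 0 ≤ j) (h1 : j < p + q) :
    ((2 * (j : ℚ) + 1 - p - q) ^ 2 - p * q) / (4 * p * q) = dL q p j + dL p q j := by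
  rcases lt_trichotomy p q with h | h | h
  · exact main_lt p q hp h hpq j h0 h1
  · have hp1 : p = 1 := by
      subst h
      simpa using hpq
    subst hp1
    subst h
    have : j = 0 ∨ j = 1 := by omega
    rcases this with h | h <;> subst h <;>
      · rw [dL_unfold 1 1 _ one_ne_zero]
        norm_num [dL_zero]
  · have h2 := main_lt q p hq h hpq.symm j h0 (by omega)
    rw [show ((2 * (j : ℚ) + 1 - p - q) ^ 2 - p * q) / (4 * p * q)
        = ((2 * (j : ℚ) + 1 - q - p) ^ 2 - q * p) / (4 * q * p) from by ring, h2]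
    ring
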